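/- Let c > 0 and let b_t = c/√t for each positive integer t. Then for every positive integer n, ∑_{t=1}^{n} α^t_n · b_t ≤ 2·b_n = 2c/√n. -/

import Mathlib

/-!
The weighted sums `S n = ∑_{t ≤ n} α^t_n f t` satisfy `S (n+1) = (1 - α_{n+1}) S n + α_{n+1} f (n+1)`,
so by induction the claim reduces to the one-step inequality
`(1 - α_{n+1}) · 2/√n + α_{n+1}/√(n+1) ≤ 2/√(n+1)`. With `1 - α_{n+1} = n/(H+n+1)` and clearing
denominators this is `2√n·√(n+1) ≤ 2n + 1 + H`, which is AM-GM.
-/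

/-- Learning rate `α_t = (H+1)/(H+t)`. -/
noncomputable def lr (H t : ℕ) : ℝ := (H + 1) / (H + t)

/-- The coefficient `α^i_t`: for `i = 0` it is `∏_{j=1}^t (1 - α_j)`, and for
`i ≥ 1` it is `α_i · ∏_{j=i+1}^t (1 - α_j)`. -/
noncomputable def alphaC (H i t : ℕ) : ℝ :=
  if i = 0 then ∏ j ∈ Finset.Icc 1 t, (1 - lr H j)
  else lr H i * ∏ j ∈ Finset.Icc (i + 1) t, (1 - lr H j)

open Finset

lemma lr_succ (H n : ℕ) : lr H (n + 1) = (H + 1) / (H + n + 1) := by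
  rw [lr, Nat.cast_succ, add_assoc]

lemma one_sub_lr_succ (H n : ℕ) : 1 - lr H (n + 1) = n / (H + n + 1) := by
  rw [lr_succ, one_sub_div (by positivity)]
  ring_nf

lemma alphaC_self {H n : ℕ} (hn : n ≠ 0) : alphaC H n n = lr H n := by
  rw [alphaC, if_neg hn, Icc_eq_empty (by omega), prod_empty, mul_one]

lemma alphaC_succ_right {H t n : ℕ} (ht : t ≠ 0) (htn : t ≤ n) :
    alphaC H t (n + 1) = (1 - lr H (n + 1)) * alphaC H t n := by
  rw [alphaC, alphaC, if_neg ht, if_neg ht, prod_Icc_succ_top (by omega)]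
  ring

lemma sum_alphaC_mul_succ (H n : ℕ) (f : ℕ → ℝ) :
    ∑ t ∈ Icc 1 (n + 1), alphaC H t (n + 1) * f t =
      (1 - lr H (n + 1)) * ∑ t ∈ Icc 1 n, alphaC H t n * f t + lr H (n + 1) * f (n + 1) := by
  rw [sum_Icc_succ_top (by omega), alphaC_self n.succ_ne_zero, mul_sum]
  congr 1
  refine sum_congr rfl fun t ht => ?_
  obtain ⟨ht1, htn⟩ := mem_Icc.mp ht
  rw [alphaC_succ_right (by omega) htn, mul_assoc]

lemma two_mul_sqrt_mul_sqrt_succ_le (n : ℕ) : 2 * (√n * √(n + 1)) ≤ 2 * n + 1 := by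
  have hsq : √(n : ℝ) ^ 2 = n := Real.sq_sqrt n.cast_nonneg
  have hsq' : √((n : ℝ) + 1) ^ 2 = n + 1 := Real.sq_sqrt (by positivity)
  nlinarith [sq_nonneg (√(n : ℝ) - √(n + 1))]

lemma lr_combination_inv_sqrt_le (H n : ℕ) :
    (1 - lr H (n + 1)) * (2 * (√n)⁻¹) + lr H (n + 1) * (√(n + 1 : ℕ))⁻¹ ≤ 2 * (√(n + 1 : ℕ))⁻¹ := by
  have hD : (0 : ℝ) < H + n + 1 := by positivity
  have hu : 0 < √((n : ℝ) + 1) := Real.sqrt_pos.mpr (by positivity)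
  have hn : (n : ℝ) * (√n)⁻¹ = √n := by rw [← div_eq_mul_inv, Real.div_sqrt]
  rw [one_sub_lr_succ, lr_succ, Nat.cast_succ]
  calc (n : ℝ) / (H + n + 1) * (2 * (√n)⁻¹) + (H + 1) / (H + n + 1) * (√(n + 1))⁻¹
      = (2 * (n * (√n)⁻¹) * √(n + 1) + (H + 1)) / ((H + n + 1) * √(n + 1)) := by
        field_simp
    _ = (2 * (√n * √(n + 1)) + (H + 1)) / ((H + n + 1) * √(n + 1)) := by
        rw [hn, mul_assoc]
    _ ≤ (2 * (H + n + 1)) / ((H + n + 1) * √(n + 1)) := by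
        gcongr
        linarith [two_mul_sqrt_mul_sqrt_succ_le n, H.cast_nonneg (α := ℝ)]
    _ = 2 * (√(n + 1))⁻¹ := by field_simp

lemma sum_alphaC_mul_inv_sqrt_le (H n : ℕ) :
    ∑ t ∈ Icc 1 n, alphaC H t n * (√t)⁻¹ ≤ 2 * (√n)⁻¹ := by
  induction n with
  | zero => simp -- the right-hand side is `2 * (√0)⁻¹ = 0`
  | succ n ih =>
    have hlr_nonneg : 0 ≤ 1 - lr H (n + 1) := by rw [one_sub_lr_succ]; positivity
    rw [sum_alphaC_mul_succ]
    calc (1 - lr H (n + 1)) * ∑ t ∈ Icc 1 n, alphaC H t n * (√t)⁻¹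
          + lr H (n + 1) * (√(n + 1 : ℕ))⁻¹
        ≤ (1 - lr H (n + 1)) * (2 * (√n)⁻¹) + lr H (n + 1) * (√(n + 1 : ℕ))⁻¹ := by
          gcongr
      _ ≤ 2 * (√(n + 1 : ℕ))⁻¹ := lr_combination_inv_sqrt_le H n

theorem stmt_11_general (H : ℕ) (c : ℝ) (hc : 0 < c)
    (b : ℕ → ℝ) (hb : ∀ t : ℕ, 1 ≤ t → b t = c / Real.sqrt t)
    (n : ℕ) :
    ∑ t ∈ Finset.Icc 1 n, alphaC H t n * b t ≤ 2 * (c / Real.sqrt n) := by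
  calc ∑ t ∈ Icc 1 n, alphaC H t n * b t = c * ∑ t ∈ Icc 1 n, alphaC H t n * (√t)⁻¹ := by
        rw [mul_sum]
        refine sum_congr rfl fun t ht => ?_
        rw [hb t (mem_Icc.mp ht).1]
        ring
    _ ≤ c * (2 * (√n)⁻¹) := by gcongr; exact sum_alphaC_mul_inv_sqrt_le H n
    _ = 2 * (c / √n) := by ring

theorem stmt_11 (H : ℕ) (hH : 1 ≤ H) (c : ℝ) (hc : 0 < c)
    (b : ℕ → ℝ) (hb : ∀ t : ℕ, 1 ≤ t → b t = c / Real.sqrt t)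
    (n : ℕ) (hn : 1 ≤ n) :
    ∑ t ∈ Finset.Icc 1 n, alphaC H t n * b t ≤ 2 * (c / Real.sqrt n) :=
  stmt_11_general H c hc b hb n
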